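/- Let U ⊆ ℂᵐ be open, H a complex Hilbert space, and h a smoothly varying metric on U × H admitting Chern connection D with curvature Θ. Fix ε > 0. Then iΘ ≤_G 0 (Griffiths seminegative) if and only if log(‖u‖²_h + ε) is plurisubharmonic for every holomorphic local section u of U × H and every ε > 0. -/

import Mathlib

/-- The (1,0)-part of the real Fréchet derivative of `u` at `t` in direction `z`:
`∂u(z) = ½(Du(z) − i·Du(i·z))`. -/
noncomputable def del {E F : Type*} [NormedAddCommGroup E] [NormedSpace ℂ E]
    [NormedAddCommGroup F] [NormedSpace ℂ F] (u : E → F) (t z : E) : F :=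
  (2⁻¹ : ℂ) • (fderiv ℝ u t z - Complex.I • fderiv ℝ u t (Complex.I • z))

/-- The (0,1)-part of the real Fréchet derivative of `u` at `t` in direction `z`:
`∂̄u(z) = ½(Du(z) + i·Du(i·z))`. -/
noncomputable def delbar {E F : Type*} [NormedAddCommGroup E] [NormedSpace ℂ E]
    [NormedAddCommGroup F] [NormedSpace ℂ F] (u : E → F) (t z : E) : F :=
  (2⁻¹ : ℂ) • (fderiv ℝ u t z + Complex.I • fderiv ℝ u t (Complex.I • z))
/-- The `(z, z̄')`-component of the Chern curvature `Θ = δ∂̄ + ∂̄δ` (as a `(1,1)`-form),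
i.e. `Θ_{z z̄'} u = δ_z(∂̄_{z'} u) − ∂̄_{z'}(δ_z u)`. -/
noncomputable def curvC {m : ℕ} {H : Type*} [NormedAddCommGroup H] [NormedSpace ℂ H]
    (δ : ((Fin m → ℂ) → H) → (Fin m → ℂ) → (Fin m → ℂ) → H)
    (u : (Fin m → ℂ) → H) (t z z' : Fin m → ℂ) : H :=
  δ (fun s => delbar u s z') t z - delbar (fun s => δ u s z) t z'
/-- Plurisubharmonicity (for the smooth functions occurring here): the complex Hessian is
positive semidefinite, componentwise `0 ≤ ∂_z ∂̄_z f` at every point of `U`, in every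
direction `z`. -/
noncomputable def PshOn {m : ℕ} (f : (Fin m → ℂ) → ℝ) (U : Set (Fin m → ℂ)) : Prop :=
  ∀ t ∈ U, ∀ z : Fin m → ℂ,
    0 ≤ (del (fun s => delbar (fun s' => (f s' : ℂ)) s z) t z).re

/-!
The curvature is `h`-hermitian, `h(Θ_{z z'} u, v) = h(u, Θ_{z' z} v)`, which is the identity
`∂_z ∂̄_z' h(u, v) = ∂̄_z' ∂_z h(u, v)` written out with the compatibility of `δ`. Hence `Θ` is a
tensor: `Θ u` at `t` only depends on `u t`. For a holomorphic section `u` and `r = ‖u‖² + ε`,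

  `∂_z ∂̄_z log r = (‖δ_z u‖² - h(Θ_{z z} u, u)) / r - |h(δ_z u, u)|² / r²`.

If `Re h(Θ a, a) ≤ 0` for all `a`, Cauchy–Schwarz `|h(δu, u)|² ≤ ‖δu‖² ‖u‖² ≤ ‖δu‖² r` makes this
nonnegative. Conversely, `u s = a - δa(t)(s - t)` is holomorphic with `u t = a` and `δu(t) = 0`, so
the formula reduces to `-Re h(Θ a, a) / r ≥ 0`.

Differentiability of `s ↦ h(u s, v s)` along smooth sections is itself a consequence of the
compatibility identity.
-/

open scoped ContDiff

lemma DifferentiableAt.of_mul_left {E : Type*} [NormedAddCommGroup E] [NormedSpace ℝ E]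
    {g q : E → ℂ} {t : E} (hg : DifferentiableAt ℝ g t) (hgt : g t ≠ 0)
    (hgq : DifferentiableAt ℝ (fun s => g s * q s) t) : DifferentiableAt ℝ q t := by
  refine ((hg.inv hgt).mul hgq).congr_of_eventuallyEq ?_
  filter_upwards [hg.continuousAt.eventually_ne hgt] with s hs
  rw [Pi.mul_apply, Pi.inv_apply, inv_mul_cancel_left₀ hs]

lemma differentiableAt_of_clm_apply {𝕜 D E F : Type*} [NontriviallyNormedField 𝕜]
    [CompleteSpace 𝕜] [NormedAddCommGroup D] [NormedSpace 𝕜 D] [NormedAddCommGroup E]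
    [NormedSpace 𝕜 E] [FiniteDimensional 𝕜 E] [NormedAddCommGroup F] [NormedSpace 𝕜 F]
    {f : D → E →L[𝕜] F} {x : D} (hf : ∀ y, DifferentiableAt 𝕜 (fun x => f x y) x) :
    DifferentiableAt 𝕜 f x := by
  have hd : Module.finrank 𝕜 E = Module.finrank 𝕜 (Fin (Module.finrank 𝕜 E) → 𝕜) :=
    (Module.finrank_fin_fun 𝕜).symm
  let e := ((ContinuousLinearEquiv.ofFinrankEq hd).arrowCongr (1 : F ≃L[𝕜] F)).trans
    (ContinuousLinearEquiv.piRing (Fin (Module.finrank 𝕜 E)))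
  rw [← Function.id_comp f, ← e.symm_comp_self]
  exact e.symm.differentiableAt.comp x (differentiableAt_pi.mpr fun i => hf _)

section Wirtinger

variable {E F : Type*} [NormedAddCommGroup E] [NormedSpace ℂ E]
  [NormedAddCommGroup F] [NormedSpace ℂ F] {u v : E → F} {t z : E}

lemma del_add_delbar (u : E → F) (t z : E) : del u t z + delbar u t z = fderiv ℝ u t z := by
  unfold del delbar; module

lemma del_of_hasFDerivAt {D : E →L[ℝ] F} (hD : HasFDerivAt u D t) :
    del u t z = (2⁻¹ : ℂ) • (D z - Complex.I • D (Complex.I • z)) := by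
  rw [del, hD.fderiv]

lemma delbar_of_hasFDerivAt {D : E →L[ℝ] F} (hD : HasFDerivAt u D t) :
    delbar u t z = (2⁻¹ : ℂ) • (D z + Complex.I • D (Complex.I • z)) := by
  rw [delbar, hD.fderiv]

lemma del_of_not_differentiableAt (hu : ¬ DifferentiableAt ℝ u t) : del u t z = 0 := by
  simp [del, fderiv_zero_of_not_differentiableAt hu]

lemma DifferentiableAt.del_eq_fderiv (hu : DifferentiableAt ℂ u t) :
    del u t z = fderiv ℂ u t z := by
  rw [del_of_hasFDerivAt (hu.hasFDerivAt.restrictScalars ℝ)]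
  simp only [ContinuousLinearMap.coe_restrictScalars', map_smul, smul_smul, Complex.I_mul_I]
  module

lemma DifferentiableAt.delbar_eq_zero (hu : DifferentiableAt ℂ u t) : delbar u t z = 0 := by
  rw [delbar_of_hasFDerivAt (hu.hasFDerivAt.restrictScalars ℝ)]
  simp only [ContinuousLinearMap.coe_restrictScalars', map_smul, smul_smul, Complex.I_mul_I]
  module

lemma del_congr (huv : u =ᶠ[nhds t] v) (z : E) : del u t z = del v t z := by
  rw [del, del, huv.fderiv_eq]

lemma delbar_congr (huv : u =ᶠ[nhds t] v) (z : E) : delbar u t z = delbar v t z := by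
  rw [delbar, delbar, huv.fderiv_eq]

lemma del_add (hu : DifferentiableAt ℝ u t) (hv : DifferentiableAt ℝ v t) :
    del (fun s => u s + v s) t z = del u t z + del v t z := by
  simp only [del, fderiv_fun_add hu hv, add_apply]; module

lemma delbar_add (hu : DifferentiableAt ℝ u t) (hv : DifferentiableAt ℝ v t) :
    delbar (fun s => u s + v s) t z = delbar u t z + delbar v t z := by
  simp only [delbar, fderiv_fun_add hu hv, add_apply]; module

lemma del_add_const (c : F) : del (fun s => u s + c) t z = del u t z := by
  rw [del, del, fderiv_add_const]

lemma delbar_add_const (c : F) : delbar (fun s => u s + c) t z = delbar u t z := by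
  rw [delbar, delbar, fderiv_add_const]

lemma del_smul {f : E → ℂ} (hf : DifferentiableAt ℝ f t) (hu : DifferentiableAt ℝ u t) :
    del (fun s => f s • u s) t z = del f t z • u t + f t • del u t z := by
  simp only [del, fderiv_fun_smul hf hu, add_apply,
    smul_apply, ContinuousLinearMap.smulRight_apply, smul_eq_mul]
  module

lemma delbar_smul {f : E → ℂ} (hf : DifferentiableAt ℝ f t) (hu : DifferentiableAt ℝ u t) :
    delbar (fun s => f s • u s) t z = delbar f t z • u t + f t • delbar u t z := by
  simp only [delbar, fderiv_fun_smul hf hu, add_apply,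
    smul_apply, ContinuousLinearMap.smulRight_apply, smul_eq_mul]
  module

lemma delbar_conj (g : E → ℂ) (t z : E) :
    delbar (fun s => starRingEnd ℂ (g s)) t z = starRingEnd ℂ (del g t z) := by
  have hc : fderiv ℝ (fun s => starRingEnd ℂ (g s)) t
      = (Complex.conjCLE : ℂ →L[ℝ] ℂ).comp (fderiv ℝ g t) :=
    Complex.conjCLE.comp_fderiv
  simp only [del, delbar, hc, ContinuousLinearMap.comp_apply, ContinuousLinearEquiv.coe_coe,
    Complex.conjCLE_apply, smul_eq_mul, map_mul, map_sub, Complex.conj_I, map_inv₀, map_ofNat]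
  ring

lemma HasFDerivAt.ofReal_comp {f : E → ℝ} {D : E →L[ℝ] ℝ} (hf : HasFDerivAt f D t) :
    HasFDerivAt (fun s => (f s : ℂ)) (Complex.ofRealCLM.comp D) t :=
  Complex.ofRealCLM.hasFDerivAt.comp t hf

lemma delbar_ofReal_log {f : E → ℝ} (hf : DifferentiableAt ℝ f t) (hpos : 0 < f t) :
    delbar (fun s => (Real.log (f s) : ℂ)) t z
      = ((f t)⁻¹ : ℂ) * delbar (fun s => (f s : ℂ)) t z := by
  have h := ((Real.hasDerivAt_log hpos.ne').comp_hasFDerivAt t hf.hasFDerivAt).ofReal_comp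
  simp only [Function.comp_def] at h
  rw [delbar_of_hasFDerivAt h, delbar_of_hasFDerivAt hf.hasFDerivAt.ofReal_comp]
  simp only [ContinuousLinearMap.comp_apply, smul_apply,
    Complex.ofRealCLM_apply, smul_eq_mul, Complex.ofReal_mul]
  push_cast
  ring

lemma del_ofReal_inv {f : E → ℝ} (hf : DifferentiableAt ℝ f t) (hne : f t ≠ 0) :
    del (fun s => ((f s)⁻¹ : ℂ)) t z = -((f t ^ 2)⁻¹ : ℂ) * del (fun s => (f s : ℂ)) t z := by
  have h := ((hasDerivAt_inv hne).comp_hasFDerivAt t hf.hasFDerivAt).ofReal_comp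
  simp only [Function.comp_def, Complex.ofReal_inv] at h
  rw [del_of_hasFDerivAt h, del_of_hasFDerivAt hf.hasFDerivAt.ofReal_comp]
  simp only [ContinuousLinearMap.comp_apply, smul_apply,
    Complex.ofRealCLM_apply, smul_eq_mul, Complex.ofReal_mul]
  push_cast
  ring

lemma del_delbar_ofReal_log {f : E → ℝ} (hf : ∀ᶠ s in nhds t, DifferentiableAt ℝ f s)
    (hpos : 0 < f t) (hdf : DifferentiableAt ℝ (fun s => delbar (fun s' => (f s' : ℂ)) s z) t) :
    del (fun s => delbar (fun s' => (Real.log (f s') : ℂ)) s z) t z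
      = ((f t)⁻¹ : ℂ) * del (fun s => delbar (fun s' => (f s' : ℂ)) s z) t z
        - ((f t ^ 2)⁻¹ : ℂ) * (del (fun s => (f s : ℂ)) t z * delbar (fun s => (f s : ℂ)) t z) := by
  have hlog : (fun s => delbar (fun s' => (Real.log (f s') : ℂ)) s z)
      =ᶠ[nhds t] fun s => ((f s)⁻¹ : ℂ) • delbar (fun s' => (f s' : ℂ)) s z := by
    filter_upwards [hf, hf.self_of_nhds.continuousAt.eventually (lt_mem_nhds hpos)]
      with s hfs hposs
    exact delbar_ofReal_log hfs hposs
  have hinv : DifferentiableAt ℝ (fun s => ((f s)⁻¹ : ℂ)) t :=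
    (Complex.ofRealCLM.differentiableAt.comp t hf.self_of_nhds).inv
      (Complex.ofReal_ne_zero.mpr hpos.ne')
  rw [del_congr hlog, del_smul hinv hdf, del_ofReal_inv hf.self_of_nhds hpos.ne', smul_eq_mul,
    smul_eq_mul]
  ring

lemma ContDiffOn.delbar {V : Set E} (hV : IsOpen V) (hu : ContDiffOn ℝ ∞ u V) (z : E) :
    ContDiffOn ℝ ∞ (fun s => delbar u s z) V := by
  have hD : ContDiffOn ℝ ∞ (fun s => fderiv ℝ u s) V :=
    hu.fderiv_of_isOpen hV (by exact_mod_cast le_top)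
  exact ((hD.clm_apply contDiffOn_const).add
    ((hD.clm_apply contDiffOn_const).const_smul Complex.I)).const_smul (2⁻¹ : ℂ)

lemma del_delbar_comm {g : E → F} (hg : ∀ᶠ s in nhds t, DifferentiableAt ℝ g s)
    (hg' : DifferentiableAt ℝ (fderiv ℝ g) t) (z z' : E) :
    del (fun s => delbar g s z') t z = delbar (fun s => del g s z) t z' := by
  set Q := fderiv ℝ (fderiv ℝ g) t
  have hsymm (a b : E) : Q a b = Q b a :=
    second_derivative_symmetric_of_eventually
      (hg.mono fun s hs => hs.hasFDerivAt) hg'.hasFDerivAt a b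
  have happ (w : E) : HasFDerivAt (fun s => fderiv ℝ g s w)
      ((ContinuousLinearMap.apply ℝ F w).comp Q) t :=
    (ContinuousLinearMap.apply ℝ F w).hasFDerivAt.comp t hg'.hasFDerivAt
  have hdelbar (w : E) : HasFDerivAt (fun s => delbar g s w) _ t :=
    ((happ w).add ((happ (Complex.I • w)).const_smul Complex.I)).const_smul (2⁻¹ : ℂ)
  have hdel (w : E) : HasFDerivAt (fun s => del g s w) _ t :=
    ((happ w).sub ((happ (Complex.I • w)).const_smul Complex.I)).const_smul (2⁻¹ : ℂ)
  rw [del_of_hasFDerivAt (hdelbar z'), delbar_of_hasFDerivAt (hdel z)]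
  simp only [smul_apply, add_apply, sub_apply,
    ContinuousLinearMap.comp_apply, ContinuousLinearMap.apply_apply]
  rw [hsymm z' z, hsymm z' (Complex.I • z), hsymm (Complex.I • z') z,
    hsymm (Complex.I • z') (Complex.I • z)]
  module

end Wirtinger

section Coordinates

variable {m : ℕ} {t z : Fin m → ℂ}

lemma differentiableAt_coord_sub (j : Fin m) (c : ℂ) :
    DifferentiableAt ℂ (fun s : Fin m → ℂ => s j - c) t := by
  fun_prop

lemma del_coord_sub (j : Fin m) (c : ℂ) : del (fun s : Fin m → ℂ => s j - c) t z = z j := by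
  rw [(differentiableAt_coord_sub j c).del_eq_fderiv, fderiv_sub_const,
    (hasFDerivAt_apply j t).fderiv, ContinuousLinearMap.proj_apply]

end Coordinates

/-- A hermitian metric `h` on the trivial bundle `U × H` together with the `(1,0)`-part `δ` of a
connection compatible with it; `h t` is linear in its first and conjugate-linear in its second
argument. -/
structure ChernConnection (m : ℕ) (H : Type*) [NormedAddCommGroup H] [NormedSpace ℂ H] where
  U : Set (Fin m → ℂ)
  isOpen_U : IsOpen U
  h : (Fin m → ℂ) → H → H → ℂ
  add_left : ∀ t ∈ U, ∀ u v w : H, h t (u + v) w = h t u w + h t v w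
  sub_left : ∀ t ∈ U, ∀ u v w : H, h t (u - v) w = h t u w - h t v w
  smul_left : ∀ t ∈ U, ∀ (c : ℂ) (u v : H), h t (c • u) v = c * h t u v
  conj_symm : ∀ t ∈ U, ∀ u v : H, h t u v = starRingEnd ℂ (h t v u)
  re_pos : ∀ t ∈ U, ∀ u : H, u ≠ 0 → 0 < (h t u u).re
  δ : ((Fin m → ℂ) → H) → (Fin m → ℂ) → (Fin m → ℂ) → H
  del_h : ∀ V : Set (Fin m → ℂ), IsOpen V → V ⊆ U →
    ∀ u v : (Fin m → ℂ) → H, ContDiffOn ℝ ∞ u V → ContDiffOn ℝ ∞ v V →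
    ∀ t ∈ V, ∀ z : Fin m → ℂ,
      del (fun s => h s (u s) (v s)) t z = h t (δ u t z) (v t) + h t (u t) (delbar v t z)
  contDiffOn_δ : ∀ V : Set (Fin m → ℂ), IsOpen V → V ⊆ U →
    ∀ u : (Fin m → ℂ) → H, ContDiffOn ℝ ∞ u V →
    ∀ z : Fin m → ℂ, ContDiffOn ℝ ∞ (fun t => δ u t z) V
  δ_congr : ∀ V : Set (Fin m → ℂ), IsOpen V → V ⊆ U →
    ∀ u v : (Fin m → ℂ) → H, (∀ s ∈ V, u s = v s) →
    ∀ t ∈ V, ∀ z : Fin m → ℂ, δ u t z = δ v t z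
  δ_add : ∀ V : Set (Fin m → ℂ), IsOpen V → V ⊆ U →
    ∀ u v : (Fin m → ℂ) → H, ContDiffOn ℝ ∞ u V → ContDiffOn ℝ ∞ v V →
    ∀ t ∈ V, ∀ z : Fin m → ℂ, δ (fun s => u s + v s) t z = δ u t z + δ v t z
  isLinearMap_δ : ∀ (u : (Fin m → ℂ) → H), ∀ t ∈ U, IsLinearMap ℂ (fun z => δ u t z)
  δ_smul : ∀ V : Set (Fin m → ℂ), IsOpen V → V ⊆ U →
    ∀ (f : (Fin m → ℂ) → ℂ) (u : (Fin m → ℂ) → H),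
    ContDiffOn ℝ ∞ f V → ContDiffOn ℝ ∞ u V →
    ∀ t ∈ V, ∀ z : Fin m → ℂ,
      δ (fun s => f s • u s) t z = del f t z • u t + f t • δ u t z

namespace ChernConnection

variable {m : ℕ} {H : Type*} [NormedAddCommGroup H] [NormedSpace ℂ H] (S : ChernConnection m H)
  {V : Set (Fin m → ℂ)} {t : Fin m → ℂ}

lemma h_zero_left (ht : t ∈ S.U) (v : H) : S.h t 0 v = 0 := by
  simpa using (S.add_left t ht 0 0 v).symm

lemma h_zero_right (ht : t ∈ S.U) (v : H) : S.h t v 0 = 0 := by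
  rw [S.conj_symm t ht, S.h_zero_left ht, map_zero]

lemma h_add_right (ht : t ∈ S.U) (u v w : H) : S.h t u (v + w) = S.h t u v + S.h t u w := by
  rw [S.conj_symm t ht, S.add_left t ht, map_add, ← S.conj_symm t ht, ← S.conj_symm t ht]

lemma h_sub_right (ht : t ∈ S.U) (u v w : H) : S.h t u (v - w) = S.h t u v - S.h t u w := by
  rw [S.conj_symm t ht, S.sub_left t ht, map_sub, ← S.conj_symm t ht, ← S.conj_symm t ht]

lemma h_smul_right (ht : t ∈ S.U) (c : ℂ) (u v : H) :
    S.h t u (c • v) = starRingEnd ℂ c * S.h t u v := by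
  rw [S.conj_symm t ht, S.smul_left t ht, map_mul, ← S.conj_symm t ht]

lemma h_neg_right (ht : t ∈ S.U) (u v : H) : S.h t u (-v) = -S.h t u v := by
  simpa [S.h_zero_right ht] using S.h_sub_right ht u 0 v

lemma ofReal_re_h_self (ht : t ∈ S.U) (u : H) : ((S.h t u u).re : ℂ) = S.h t u u := by
  refine Complex.ext rfl ?_
  have him := congrArg Complex.im (S.conj_symm t ht u u)
  simp only [Complex.conj_im] at him
  simp only [Complex.ofReal_im]
  linarith

lemma re_h_self_nonneg (ht : t ∈ S.U) (u : H) : 0 ≤ (S.h t u u).re := by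
  rcases eq_or_ne u 0 with rfl | hu
  · simp [S.h_zero_left ht]
  · exact (S.re_pos t ht u hu).le

lemma eq_zero_of_h_self_eq_zero (ht : t ∈ S.U) {u : H} (hu : S.h t u u = 0) : u = 0 := by
  by_contra hne
  simpa [hu] using S.re_pos t ht u hne

lemma normSq_h_le (ht : t ∈ S.U) (x y : H) :
    Complex.normSq (S.h t x y) ≤ (S.h t x x).re * (S.h t y y).re := by
  rcases eq_or_ne y 0 with rfl | hy
  · simp [S.h_zero_right ht]
  set b : ℝ := (S.h t y y).re
  set β : ℂ := S.h t x y
  have hb : 0 < b := S.re_pos t ht y hy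
  have expand : S.h t ((b : ℂ) • x - β • y) ((b : ℂ) • x - β • y)
      = (b : ℂ) ^ 2 * S.h t x x - (b : ℂ) * (Complex.normSq β : ℂ) := by
    have hyy : S.h t y y = b := (S.ofReal_re_h_self ht y).symm
    have hxy : S.h t x y = β := rfl
    have hyx : S.h t y x = starRingEnd ℂ β := S.conj_symm t ht y x
    simp only [S.sub_left t ht, S.smul_left t ht, S.h_sub_right ht, S.h_smul_right ht, hyy, hxy,
      hyx, Complex.conj_ofReal, ← Complex.mul_conj]
    ring
  have key := S.re_h_self_nonneg ht ((b : ℂ) • x - β • y)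
  rw [expand] at key
  simp only [Complex.sub_re, Complex.mul_re, Complex.ofReal_re, Complex.ofReal_im, pow_two,
    Complex.mul_im, zero_mul, mul_zero, sub_zero] at key
  nlinarith [Complex.normSq_nonneg β]

/-- Where `q = h(w, w)` is not differentiable, `del q = 0` by convention. Comparing the
compatibility identities for `w` and for `λ w`, with `λ` holomorphic, `λ t = 1`, `∂_j λ = 1`,
then forces `h(w t, w t) = 0`. -/
lemma eq_zero_of_not_differentiableAt_h_self (hV : IsOpen V) (hVU : V ⊆ S.U)
    {w : (Fin m → ℂ) → H} (hw : ContDiffOn ℝ ∞ w V) (ht : t ∈ V) (j : Fin m)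
    (hnd : ¬ DifferentiableAt ℝ (fun s => S.h s (w s) (w s)) t) : w t = 0 := by
  set lam : (Fin m → ℂ) → ℂ := fun s => s j - (t j - 1)
  have hlam {s} : DifferentiableAt ℂ lam s := differentiableAt_coord_sub j _
  have hlam_t : lam t = 1 := by simp [lam]
  have hlam_smooth : ContDiffOn ℝ ∞ lam V := by fun_prop
  have hlamw : ContDiffOn ℝ ∞ (fun s => lam s • w s) V := hlam_smooth.smul hw
  have hnd' : ¬ DifferentiableAt ℝ (fun s => S.h s (lam s • w s) (lam s • w s)) t := by
    intro hd
    refine hnd (DifferentiableAt.of_mul_left (g := fun s => lam s * starRingEnd ℂ (lam s))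
      (by fun_prop) (by simp [hlam_t]) (hd.congr_of_eventuallyEq ?_))
    filter_upwards [hV.mem_nhds ht] with s hs
    rw [S.smul_left s (hVU hs), S.h_smul_right (hVU hs)]
    ring
  have e1 := S.del_h V hV hVU w w hw hw t ht (Pi.single j 1)
  have e2 := S.del_h V hV hVU _ _ hlamw hlamw t ht (Pi.single j 1)
  rw [del_of_not_differentiableAt hnd] at e1
  rw [del_of_not_differentiableAt hnd', S.δ_smul V hV hVU lam w hlam_smooth hw t ht,
    delbar_smul (hlam.restrictScalars ℝ) ((hw.differentiableOn (by simp)).differentiableAt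
      (hV.mem_nhds ht)), hlam.delbar_eq_zero, del_coord_sub, hlam_t] at e2
  simp only [Pi.single_eq_same, one_smul, zero_smul, zero_add, S.add_left t (hVU ht)] at e2
  exact S.eq_zero_of_h_self_eq_zero (hVU ht) (by linear_combination e1 - e2)

lemma differentiableAt_h_self (hV : IsOpen V) (hVU : V ⊆ S.U) {w : (Fin m → ℂ) → H}
    (hw : ContDiffOn ℝ ∞ w V) (ht : t ∈ V) :
    DifferentiableAt ℝ (fun s => S.h s (w s) (w s)) t := by
  rcases isEmpty_or_nonempty (Fin m) with hm | hm
  · exact differentiable_of_subsingleton.differentiableAt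
  obtain ⟨j⟩ := hm
  have of_ne {w : (Fin m → ℂ) → H} (hw : ContDiffOn ℝ ∞ w V) (hwt : w t ≠ 0) :
      DifferentiableAt ℝ (fun s => S.h s (w s) (w s)) t := by
    by_contra hnd
    exact hwt (S.eq_zero_of_not_differentiableAt_h_self hV hVU hw ht j hnd)
  by_cases hwt : w t = 0
  swap
  · exact of_ne hw hwt
  rcases subsingleton_or_nontrivial H with hH | hH
  · refine (differentiableAt_const 0).congr_of_eventuallyEq ?_
    filter_upwards [hV.mem_nhds ht] with s hs
    rw [Subsingleton.elim (w s) 0, S.h_zero_left (hVU hs)]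
  obtain ⟨x, hx⟩ := exists_ne (0 : H)
  -- `h(w, w) = 2 h(w + x, w + x) - h(w + 2x, w + 2x) + 2 h(x, x)` with `w + x`, `w + 2x`, `x`
  -- nonzero at `t`
  have d1 := of_ne (hw.add (contDiffOn_const (c := x))) (by simpa [hwt] using hx)
  have d2 := of_ne (hw.add (contDiffOn_const (c := (2 : ℂ) • x))) (by simpa [hwt] using hx)
  have d0 := of_ne (contDiffOn_const (c := x)) hx
  refine (((d1.const_mul 2).sub d2).add (d0.const_mul 2)).congr_of_eventuallyEq ?_
  filter_upwards [hV.mem_nhds ht] with s hs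
  simp only [Pi.add_apply, Pi.sub_apply, S.add_left s (hVU hs), S.h_add_right (hVU hs),
    S.smul_left s (hVU hs), S.h_smul_right (hVU hs), map_ofNat]
  ring

lemma h_polarization (ht : t ∈ S.U) (x y : H) :
    S.h t x y = 4⁻¹ * (S.h t (x + y) (x + y) - S.h t (x - y) (x - y)
      + Complex.I * S.h t (x + Complex.I • y) (x + Complex.I • y)
      - Complex.I * S.h t (x - Complex.I • y) (x - Complex.I • y)) := by
  simp only [S.add_left t ht, S.sub_left t ht, S.h_add_right ht, S.h_sub_right ht,
    S.smul_left t ht, S.h_smul_right ht, Complex.conj_I]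
  ring_nf
  rw [Complex.I_sq]
  ring

lemma differentiableAt_h (hV : IsOpen V) (hVU : V ⊆ S.U) {u v : (Fin m → ℂ) → H}
    (hu : ContDiffOn ℝ ∞ u V) (hv : ContDiffOn ℝ ∞ v V) (ht : t ∈ V) :
    DifferentiableAt ℝ (fun s => S.h s (u s) (v s)) t := by
  have hIv : ContDiffOn ℝ ∞ (fun s => Complex.I • v s) V := hv.const_smul _
  have d1 := S.differentiableAt_h_self hV hVU (hu.add hv) ht
  have d2 := S.differentiableAt_h_self hV hVU (hu.sub hv) ht
  have d3 := S.differentiableAt_h_self hV hVU (hu.add hIv) ht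
  have d4 := S.differentiableAt_h_self hV hVU (hu.sub hIv) ht
  refine ((((d1.sub d2).add (d3.const_mul Complex.I)).sub (d4.const_mul Complex.I)).const_mul
    4⁻¹).congr_of_eventuallyEq ?_
  filter_upwards [hV.mem_nhds ht] with s hs
  exact S.h_polarization (hVU hs) (u s) (v s)

lemma delbar_h (hV : IsOpen V) (hVU : V ⊆ S.U) {u v : (Fin m → ℂ) → H}
    (hu : ContDiffOn ℝ ∞ u V) (hv : ContDiffOn ℝ ∞ v V) (ht : t ∈ V) (z : Fin m → ℂ) :
    delbar (fun s => S.h s (u s) (v s)) t z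
      = S.h t (u t) (S.δ v t z) + S.h t (delbar u t z) (v t) := by
  have hconj : (fun s => S.h s (u s) (v s)) =ᶠ[nhds t]
      fun s => starRingEnd ℂ (S.h s (v s) (u s)) := by
    filter_upwards [hV.mem_nhds ht] with s hs
    exact S.conj_symm s (hVU hs) (u s) (v s)
  rw [delbar_congr hconj, delbar_conj, S.del_h V hV hVU v u hv hu t ht z, map_add,
    ← S.conj_symm t (hVU ht), ← S.conj_symm t (hVU ht)]

lemma differentiableAt_fderiv_h (hV : IsOpen V) (hVU : V ⊆ S.U) {u v : (Fin m → ℂ) → H}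
    (hu : ContDiffOn ℝ ∞ u V) (hv : ContDiffOn ℝ ∞ v V) (ht : t ∈ V) :
    DifferentiableAt ℝ (fderiv ℝ fun s => S.h s (u s) (v s)) t := by
  refine differentiableAt_of_clm_apply fun w => ?_
  have hδu := S.contDiffOn_δ V hV hVU u hu w
  have hδv := S.contDiffOn_δ V hV hVU v hv w
  have d1 := S.differentiableAt_h hV hVU hδu hv ht
  have d2 := S.differentiableAt_h hV hVU hu (hv.delbar hV w) ht
  have d3 := S.differentiableAt_h hV hVU hu hδv ht
  have d4 := S.differentiableAt_h hV hVU (hu.delbar hV w) hv ht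
  refine ((d1.add d2).add (d3.add d4)).congr_of_eventuallyEq ?_
  filter_upwards [hV.mem_nhds ht] with s hs
  rw [← del_add_delbar, S.del_h V hV hVU u v hu hv s hs, S.delbar_h hV hVU hu hv hs]
  rfl

lemma h_curvC_left (hV : IsOpen V) (hVU : V ⊆ S.U) {u v : (Fin m → ℂ) → H}
    (hu : ContDiffOn ℝ ∞ u V) (hv : ContDiffOn ℝ ∞ v V) (ht : t ∈ V) (z z' : Fin m → ℂ) :
    S.h t (curvC S.δ u t z z') (v t) = S.h t (u t) (curvC S.δ v t z' z) := by
  have hδu := S.contDiffOn_δ V hV hVU u hu z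
  have hδv := S.contDiffOn_δ V hV hVU v hv z'
  have hdbu := hu.delbar hV z'
  have hdbv := hv.delbar hV z
  have hcomm := del_delbar_comm (Filter.eventually_of_mem (hV.mem_nhds ht)
    fun s hs => S.differentiableAt_h hV hVU hu hv hs) (S.differentiableAt_fderiv_h hV hVU hu hv ht)
    z z'
  have hdelbar : (fun s => delbar (fun s' => S.h s' (u s') (v s')) s z') =ᶠ[nhds t]
      fun s => S.h s (u s) (S.δ v s z') + S.h s (delbar u s z') (v s) := by
    filter_upwards [hV.mem_nhds ht] with s hs
    exact S.delbar_h hV hVU hu hv hs z'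
  have hdel : (fun s => del (fun s' => S.h s' (u s') (v s')) s z) =ᶠ[nhds t]
      fun s => S.h s (S.δ u s z) (v s) + S.h s (u s) (delbar v s z) := by
    filter_upwards [hV.mem_nhds ht] with s hs
    exact S.del_h V hV hVU u v hu hv s hs z
  rw [del_congr hdelbar, delbar_congr hdel,
    del_add (S.differentiableAt_h hV hVU hu hδv ht) (S.differentiableAt_h hV hVU hdbu hv ht),
    delbar_add (S.differentiableAt_h hV hVU hδu hv ht) (S.differentiableAt_h hV hVU hu hdbv ht),
    S.del_h V hV hVU _ _ hu hδv t ht, S.del_h V hV hVU _ _ hdbu hv t ht,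
    S.delbar_h hV hVU hδu hv ht, S.delbar_h hV hVU hu hdbv ht] at hcomm
  rw [curvC, curvC, S.sub_left t (hVU ht), S.h_sub_right (hVU ht)]
  linear_combination hcomm

lemma δ_zero (hV : IsOpen V) (hVU : V ⊆ S.U) (ht : t ∈ V) (z : Fin m → ℂ) :
    S.δ (fun _ => (0 : H)) t z = 0 := by
  simpa using
    S.δ_add V hV hVU (fun _ => (0 : H)) (fun _ => 0) contDiffOn_const contDiffOn_const t ht z

lemma curvC_add (hV : IsOpen V) (hVU : V ⊆ S.U) {u v : (Fin m → ℂ) → H}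
    (hu : ContDiffOn ℝ ∞ u V) (hv : ContDiffOn ℝ ∞ v V) (ht : t ∈ V) (z z' : Fin m → ℂ) :
    curvC S.δ (fun s => u s + v s) t z z' = curvC S.δ u t z z' + curvC S.δ v t z z' := by
  have hdiff {w : (Fin m → ℂ) → H} (hw : ContDiffOn ℝ ∞ w V) {s} (hs : s ∈ V) :
      DifferentiableAt ℝ w s := (hw.contDiffAt (hV.mem_nhds hs)).differentiableAt (by simp)
  have h1 : S.δ (fun s => delbar (fun s' => u s' + v s') s z') t z
      = S.δ (fun s => delbar u s z') t z + S.δ (fun s => delbar v s z') t z := by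
    rw [S.δ_congr V hV hVU _ _ (fun s hs => delbar_add (hdiff hu hs) (hdiff hv hs)) t ht z]
    exact S.δ_add V hV hVU _ _ (hu.delbar hV z') (hv.delbar hV z') t ht z
  have h2 : (fun s => S.δ (fun s' => u s' + v s') s z) =ᶠ[nhds t]
      fun s => S.δ u s z + S.δ v s z := by
    filter_upwards [hV.mem_nhds ht] with s hs
    exact S.δ_add V hV hVU u v hu hv s hs z
  rw [curvC, curvC, curvC, h1, delbar_congr h2, delbar_add
    (hdiff (S.contDiffOn_δ V hV hVU u hu z) ht) (hdiff (S.contDiffOn_δ V hV hVU v hv z) ht)]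
  abel

lemma curvC_congr (hV : IsOpen V) (hVU : V ⊆ S.U) {u v : (Fin m → ℂ) → H}
    (hu : ContDiffOn ℝ ∞ u V) (hv : ContDiffOn ℝ ∞ v V) (ht : t ∈ V) (huv : u t = v t)
    (z z' : Fin m → ℂ) : curvC S.δ u t z z' = curvC S.δ v t z z' := by
  have hvanish : curvC S.δ (fun s => v s - u s) t z z' = 0 := by
    apply S.eq_zero_of_h_self_eq_zero (hVU ht)
    rw [S.h_curvC_left hV hVU (hv.sub hu) contDiffOn_const ht, huv, sub_self,
      S.h_zero_left (hVU ht)]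
  have hsum := S.curvC_add hV hVU hu (hv.sub hu) ht z z'
  simp only [add_sub_cancel] at hsum
  rw [hsum, hvanish, add_zero]

lemma delbar_δ_of_holomorphic (hV : IsOpen V) (hVU : V ⊆ S.U) {u : (Fin m → ℂ) → H}
    (hhol : ∀ s ∈ V, ∀ z : Fin m → ℂ, delbar u s z = 0) (ht : t ∈ V) (z z' : Fin m → ℂ) :
    delbar (fun s => S.δ u s z) t z' = -curvC S.δ u t z z' := by
  rw [curvC, S.δ_congr V hV hVU _ (fun _ => 0) (fun s hs => hhol s hs z') t ht z,
    S.δ_zero hV hVU ht, zero_sub, neg_neg]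

lemma re_del_delbar_log_h_self_add (hV : IsOpen V) (hVU : V ⊆ S.U) {u : (Fin m → ℂ) → H}
    (hu : ContDiffOn ℝ ∞ u V) (hhol : ∀ s ∈ V, ∀ z : Fin m → ℂ, delbar u s z = 0)
    (ht : t ∈ V) (z : Fin m → ℂ) {ε : ℝ} (hε : 0 < ε) :
    (del (fun s => delbar (fun s' => (Real.log ((S.h s' (u s') (u s')).re + ε) : ℂ)) s z) t z).re
      = ((S.h t (u t) (u t)).re + ε)⁻¹
          * ((S.h t (S.δ u t z) (S.δ u t z)).re - (S.h t (curvC S.δ u t z z) (u t)).re)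
        - (((S.h t (u t) (u t)).re + ε) ^ 2)⁻¹ * Complex.normSq (S.h t (S.δ u t z) (u t)) := by
  have htU := hVU ht
  have hδu := S.contDiffOn_δ V hV hVU u hu z
  set f : (Fin m → ℂ) → ℝ := fun s => (S.h s (u s) (u s)).re + ε
  have hf : ∀ᶠ s in nhds t, DifferentiableAt ℝ f s :=
    Filter.eventually_of_mem (hV.mem_nhds ht) fun s hs =>
      (Complex.reCLM.differentiableAt.comp s (S.differentiableAt_h hV hVU hu hu hs)).add_const ε
  have hcast {s₀} (hs₀ : s₀ ∈ V) : (fun s => (f s : ℂ)) =ᶠ[nhds s₀]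
      fun s => S.h s (u s) (u s) + (ε : ℂ) := by
    filter_upwards [hV.mem_nhds hs₀] with s hs
    simp only [f, Complex.ofReal_add, S.ofReal_re_h_self (hVU hs)]
  have hdelbar_f : (fun s => delbar (fun s' => (f s' : ℂ)) s z) =ᶠ[nhds t]
      fun s => S.h s (u s) (S.δ u s z) := by
    filter_upwards [hV.mem_nhds ht] with s hs
    rw [delbar_congr (hcast hs), delbar_add_const, S.delbar_h hV hVU hu hu hs, hhol s hs,
      S.h_zero_left (hVU hs), add_zero]
  have hdel_f : del (fun s => (f s : ℂ)) t z = S.h t (S.δ u t z) (u t) := by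
    rw [del_congr (hcast ht), del_add_const, S.del_h V hV hVU u u hu hu t ht, hhol t ht,
      S.h_zero_right htU, add_zero]
  have hdel_delbar_f : del (fun s => delbar (fun s' => (f s' : ℂ)) s z) t z
      = S.h t (S.δ u t z) (S.δ u t z) - S.h t (u t) (curvC S.δ u t z z) := by
    rw [del_congr hdelbar_f, S.del_h V hV hVU u _ hu hδu t ht,
      S.delbar_δ_of_holomorphic hV hVU hhol ht, S.h_neg_right htU, sub_eq_add_neg]
  have hlog := del_delbar_ofReal_log hf (add_pos_of_nonneg_of_pos (S.re_h_self_nonneg htU _) hε)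
    ((S.differentiableAt_h hV hVU hu hδu ht).congr_of_eventuallyEq hdelbar_f)
    (z := z)
  rw [hlog, hdel_delbar_f, hdel_f, hdelbar_f.eq_of_nhds, S.conj_symm t htU (u t) (S.δ u t z),
    Complex.mul_conj]
  have hre : (S.h t (u t) (curvC S.δ u t z z)).re = (S.h t (curvC S.δ u t z z) (u t)).re := by
    rw [S.conj_symm t htU, Complex.conj_re]
  simp only [Complex.sub_re, ← Complex.ofReal_inv, ← Complex.ofReal_pow, Complex.re_ofReal_mul,
    hre]
  rfl

lemma pshOn_log_h_self_add
    (hneg : ∀ v : (Fin m → ℂ) → H, ContDiffOn ℝ ∞ v S.U →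
      ∀ t ∈ S.U, ∀ z : Fin m → ℂ, (S.h t (curvC S.δ v t z z) (v t)).re ≤ 0)
    (hV : IsOpen V) (hVU : V ⊆ S.U) {u : (Fin m → ℂ) → H} (hu : ContDiffOn ℝ ∞ u V)
    (hhol : ∀ s ∈ V, ∀ z : Fin m → ℂ, delbar u s z = 0) {ε : ℝ} (hε : 0 < ε) :
    PshOn (fun t => Real.log ((S.h t (u t) (u t)).re + ε)) V := by
  intro t ht z
  have htU := hVU ht
  rw [S.re_del_delbar_log_h_self_add hV hVU hu hhol ht z hε]
  set A := (S.h t (S.δ u t z) (S.δ u t z)).re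
  set q := (S.h t (u t) (u t)).re
  have hA : 0 ≤ A := S.re_h_self_nonneg htU _
  have hq : 0 ≤ q := S.re_h_self_nonneg htU _
  have hr : 0 < q + ε := by linarith
  have hcurv : (S.h t (curvC S.δ u t z z) (u t)).re ≤ 0 := by
    rw [S.curvC_congr hV hVU hu contDiffOn_const ht rfl]
    exact hneg _ contDiffOn_const t htU z
  have hCS : Complex.normSq (S.h t (S.δ u t z) (u t)) ≤ A * q := S.normSq_h_le htU _ _
  rw [sub_nonneg]
  calc ((q + ε) ^ 2)⁻¹ * Complex.normSq (S.h t (S.δ u t z) (u t))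
      ≤ ((q + ε) ^ 2)⁻¹ * (A * (q + ε)) := by gcongr; nlinarith
    _ = (q + ε)⁻¹ * A := by field_simp
    _ ≤ (q + ε)⁻¹ * (A - (S.h t (curvC S.δ u t z z) (u t)).re) := by gcongr; linarith

lemma δ_sum (hV : IsOpen V) (hVU : V ⊆ S.U) {ι : Type*} (I : Finset ι)
    {g : ι → (Fin m → ℂ) → H} (hg : ∀ i ∈ I, ContDiffOn ℝ ∞ (g i) V) (ht : t ∈ V)
    (z : Fin m → ℂ) : S.δ (fun s => ∑ i ∈ I, g i s) t z = ∑ i ∈ I, S.δ (g i) t z := by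
  classical
  induction I using Finset.induction_on with
  | empty => simpa using S.δ_zero hV hVU ht z
  | insert i I hi ih =>
    simp only [Finset.sum_insert hi]
    rw [S.δ_add V hV hVU _ _ (hg i (I.mem_insert_self i))
      (ContDiffOn.sum fun j hj => hg j (Finset.mem_insert_of_mem hj)) t ht z,
      ih fun j hj => hg j (Finset.mem_insert_of_mem hj)]

lemma exists_holomorphic_δ_eq_zero (ht : t ∈ S.U) (a : H) :
    ∃ u : (Fin m → ℂ) → H, ContDiffOn ℝ ∞ u S.U ∧ (∀ s ∈ S.U, ∀ z, delbar u s z = 0) ∧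
      u t = a ∧ ∀ z, S.δ u t z = 0 := by
  set c : Fin m → H := fun j => -S.δ (fun _ => a) t (Pi.single j 1)
  have hhol : Differentiable ℂ fun s : Fin m → ℂ => a + ∑ j, (s j - t j) • c j := by fun_prop
  have hcoord (j : Fin m) : ContDiffOn ℝ ∞ (fun s : Fin m → ℂ => s j - t j) S.U := by fun_prop
  refine ⟨_, by fun_prop, fun s _ z => (hhol s).delbar_eq_zero, by simp, fun z => ?_⟩
  have hterm (j : Fin m) : S.δ (fun s => (s j - t j) • c j) t z = z j • c j := by
    rw [S.δ_smul _ S.isOpen_U subset_rfl _ _ (hcoord j) contDiffOn_const t ht z, del_coord_sub,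
      sub_self, zero_smul, add_zero]
  have hlin : ∑ j, z j • S.δ (fun _ => a) t (Pi.single j 1) = S.δ (fun _ => a) t z := by
    have hsingle (j : Fin m) : (Pi.single j 1 : Fin m → ℂ) = fun k => if j = k then 1 else 0 := by
      ext k
      simp [Pi.single_apply, eq_comm]
    simp only [hsingle]
    exact ((IsLinearMap.mk' _ (S.isLinearMap_δ (fun _ => a) t ht)).pi_apply_eq_sum_univ z).symm
  rw [S.δ_add _ S.isOpen_U subset_rfl _ _ contDiffOn_const (by fun_prop) t ht,
    S.δ_sum S.isOpen_U subset_rfl _ (g := fun j s => (s j - t j) • c j)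
      (fun j _ => (hcoord j).smul contDiffOn_const) ht]
  rw [Finset.sum_congr rfl fun j _ => hterm j]
  simp only [c, smul_neg, Finset.sum_neg_distrib, hlin, add_neg_cancel]

lemma re_h_curvC_self_nonpos
    (hpsh : ∀ V : Set (Fin m → ℂ), IsOpen V → V ⊆ S.U →
      ∀ u : (Fin m → ℂ) → H, ContDiffOn ℝ ∞ u V → (∀ t ∈ V, ∀ z : Fin m → ℂ, delbar u t z = 0) →
      ∀ ε : ℝ, 0 < ε → PshOn (fun t => Real.log ((S.h t (u t) (u t)).re + ε)) V)
    {v : (Fin m → ℂ) → H} (hv : ContDiffOn ℝ ∞ v S.U) (ht : t ∈ S.U) (z : Fin m → ℂ) :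
    (S.h t (curvC S.δ v t z z) (v t)).re ≤ 0 := by
  obtain ⟨u, hu, hhol, hut, hδu⟩ := S.exists_holomorphic_δ_eq_zero ht (v t)
  have hlevi := hpsh S.U S.isOpen_U subset_rfl u hu hhol 1 one_pos t ht z
  rw [S.re_del_delbar_log_h_self_add S.isOpen_U subset_rfl hu hhol ht z one_pos, hδu,
    S.curvC_congr S.isOpen_U subset_rfl hu hv ht hut, hut] at hlevi
  simp only [S.h_zero_left ht, Complex.zero_re, zero_sub, Complex.normSq_zero, mul_zero,
    sub_zero] at hlevi
  have hr : 0 < (S.h t (v t) (v t)).re + 1 := by linarith [S.re_h_self_nonneg ht (v t)]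
  exact neg_nonneg.mp ((mul_nonneg_iff_of_pos_left (inv_pos.mpr hr)).mp hlevi)

end ChernConnection

/-- `h` a smoothly varying metric on `U × H` admitting a Chern connection `D`
(all the usual structural hypotheses, stated for local sections over open `V ⊆ U`), with
curvature `Θ`.  Then `iΘ ≤_G 0` (Griffiths seminegative, i.e. `Re h(Θ_{zz̄} v, v) ≤ 0` for
all smooth sections `v`) iff `log(‖u‖²_h + ε)` is plurisubharmonic for every holomorphic
local section `u` of `U × H` and every `ε > 0`. -/
theorem statement_19 {m : ℕ} {H : Type*} [NormedAddCommGroup H] [NormedSpace ℂ H]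
    (U : Set (Fin m → ℂ)) (hU : IsOpen U)
    (h : (Fin m → ℂ) → H → H → ℂ)
    (hadd : ∀ t ∈ U, ∀ u v w' : H, h t (u + v) w' = h t u w' + h t v w')
    (hsub : ∀ t ∈ U, ∀ u v w' : H, h t (u - v) w' = h t u w' - h t v w')
    (hsmul : ∀ t ∈ U, ∀ (c : ℂ) (u v : H), h t (c • u) v = c * h t u v)
    (hsymm : ∀ t ∈ U, ∀ u v : H, h t u v = starRingEnd ℂ (h t v u))
    (hpos : ∀ t ∈ U, ∀ u : H, u ≠ 0 → 0 < (h t u u).re)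
    (δ : ((Fin m → ℂ) → H) → (Fin m → ℂ) → (Fin m → ℂ) → H)
    -- metric compatibility, on local sections over any open `V ⊆ U`:
    (hδ : ∀ V : Set (Fin m → ℂ), IsOpen V → V ⊆ U →
      ∀ u v : (Fin m → ℂ) → H, ContDiffOn ℝ (⊤ : ℕ∞) u V → ContDiffOn ℝ (⊤ : ℕ∞) v V →
      ∀ t ∈ V, ∀ z : Fin m → ℂ,
        del (fun s => h s (u s) (v s)) t z = h t (δ u t z) (v t) + h t (u t) (delbar v t z))
    (hδsm : ∀ V : Set (Fin m → ℂ), IsOpen V → V ⊆ U →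
      ∀ u : (Fin m → ℂ) → H, ContDiffOn ℝ (⊤ : ℕ∞) u V →
      ∀ z : Fin m → ℂ, ContDiffOn ℝ (⊤ : ℕ∞) (fun t => δ u t z) V)
    (hδloc : ∀ V : Set (Fin m → ℂ), IsOpen V → V ⊆ U →
      ∀ u v : (Fin m → ℂ) → H, (∀ s ∈ V, u s = v s) →
      ∀ t ∈ V, ∀ z : Fin m → ℂ, δ u t z = δ v t z)
    (hδadd : ∀ V : Set (Fin m → ℂ), IsOpen V → V ⊆ U →
      ∀ u v : (Fin m → ℂ) → H, ContDiffOn ℝ (⊤ : ℕ∞) u V → ContDiffOn ℝ (⊤ : ℕ∞) v V →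
      ∀ t ∈ V, ∀ z : Fin m → ℂ, δ (fun s => u s + v s) t z = δ u t z + δ v t z)
    (hδlin : ∀ (u : (Fin m → ℂ) → H), ∀ t ∈ U, IsLinearMap ℂ (fun z => δ u t z))
    (hLeib : ∀ V : Set (Fin m → ℂ), IsOpen V → V ⊆ U →
      ∀ (f : (Fin m → ℂ) → ℂ) (u : (Fin m → ℂ) → H),
      ContDiffOn ℝ (⊤ : ℕ∞) f V → ContDiffOn ℝ (⊤ : ℕ∞) u V →
      ∀ t ∈ V, ∀ z : Fin m → ℂ,
        δ (fun s => f s • u s) t z = del f t z • u t + f t • δ u t z) :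
    (∀ v : (Fin m → ℂ) → H, ContDiffOn ℝ (⊤ : ℕ∞) v U →
        ∀ t ∈ U, ∀ z : Fin m → ℂ, (h t (curvC δ v t z z) (v t)).re ≤ 0)
      ↔ (∀ V : Set (Fin m → ℂ), IsOpen V → V ⊆ U →
          ∀ u : (Fin m → ℂ) → H, ContDiffOn ℝ (⊤ : ℕ∞) u V →
          (∀ t ∈ V, ∀ z : Fin m → ℂ, delbar u t z = 0) →
          ∀ ε : ℝ, 0 < ε →
            PshOn (fun t => Real.log ((h t (u t) (u t)).re + ε)) V) := by
  let S : ChernConnection m H :=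
    ⟨U, hU, h, hadd, hsub, hsmul, hsymm, hpos, δ, hδ, hδsm, hδloc, hδadd, hδlin, hLeib⟩
  exact ⟨fun hneg V hV hVU u hu hhol ε hε => S.pshOn_log_h_self_add hneg hV hVU hu hhol hε,
    fun hpsh v hv t ht z => S.re_h_curvC_self_nonpos hpsh hv ht z⟩
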